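/- Let W and B be symmetric positive definite n×n matrices, l ≥ 2, k ≥ 2, and define V̂ = ((l−1)/l)W + (1 + 1/k)(B/l). Then for every i, the i-th PSRF satisfies PSRFᵢ² = V̂ᵢᵢ/Wᵢᵢ ≤ (l−1)/l + ((k+1)/k)λ_max(W^{-1}B)/l = MPSRF², i.e., the maximum of the PSRFs is bounded above by the MPSRF. -/

import Mathlib

open Matrix

lemma rayleigh_bound {n : ℕ} (M : Matrix (Fin n) (Fin n) ℝ) (hM : M.IsHermitian) (lam : ℝ)
    (h : ∀ μ : ℝ, ∀ v : Fin n → ℝ, v ≠ 0 → M.mulVec v = μ • v → μ ≤ lam) :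
    ∀ x : Fin n → ℝ, x ⬝ᵥ M.mulVec x ≤ lam * (x ⬝ᵥ x) := by
  intro x
  classical
  have hspec := hM.spectral_theorem
  set U : Matrix (Fin n) (Fin n) ℝ := (hM.eigenvectorUnitary : Matrix (Fin n) (Fin n) ℝ) with hU
  set y : Fin n → ℝ := (star U).mulVec x with hy
  have hUu : U * star U = 1 := mem_unitaryGroup_iff.mp hM.eigenvectorUnitary.2
  have hUu' : star U * U = 1 := mem_unitaryGroup_iff'.mp hM.eigenvectorUnitary.2
  have heig : ∀ i, hM.eigenvalues i ≤ lam := by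
    intro i
    exact h _ _ ((WithLp.ofLp_eq_zero 2).ne.2 <| hM.eigenvectorBasis.orthonormal.ne_zero i) (hM.mulVec_eigenvectorBasis i)
  have hxMx : x ⬝ᵥ M.mulVec x = ∑ i, hM.eigenvalues i * (y i * y i) := by
    conv_lhs => rw [hspec]
    rw [Unitary.conjStarAlgAut_apply, ← mulVec_mulVec, ← mulVec_mulVec, dotProduct_mulVec]
    have : x ᵥ* U = y := by
      rw [hy, ← mulVec_transpose, ← conjTranspose_eq_transpose_of_trivial, star_eq_conjTranspose]
    rw [this, show star (↑hM.eigenvectorUnitary : Matrix (Fin n) (Fin n) ℝ) *ᵥ x = y from rfl]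
    simp [mulVec_diagonal, dotProduct, mul_comm, mul_left_comm, Function.comp]
  have hxx : x ⬝ᵥ x = ∑ i, y i * y i := by
    have : y ⬝ᵥ y = x ⬝ᵥ x := by
      rw [hy, dotProduct_mulVec, ← mulVec_transpose, ← conjTranspose_eq_transpose_of_trivial,
        star_eq_conjTranspose, conjTranspose_conjTranspose, mulVec_mulVec]
      rw [show U * Uᴴ = 1 from star_eq_conjTranspose U ▸ hUu, one_mulVec]
    rw [← this]; rfl
  rw [hxMx, hxx, Finset.mul_sum]
  apply Finset.sum_le_sum
  intro i _
  have := mul_self_nonneg (y i)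
  nlinarith [heig i]

lemma dot_helper {n : ℕ} (A : Matrix (Fin n) (Fin n) ℝ) (x u : Fin n → ℝ) :
    x ⬝ᵥ Aᵀ.mulVec u = A.mulVec x ⬝ᵥ u := by
  rw [dotProduct_mulVec, vecMul_transpose]

/-- With `V̂ = ((l-1)/l) W + (1 + 1/k) B/l`, the square of every univariate
potential scale reduction factor, `PSRFᵢ² = V̂ᵢᵢ/Wᵢᵢ`, is bounded above by the
square of the multivariate PSRF,
`MPSRF² = (l-1)/l + ((k+1)/k) λ_max(W⁻¹B)/l`. -/
theorem psrf_le_mpsrf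
    (n l k : ℕ) (hl : 2 ≤ l) (hk : 2 ≤ k)
    (W B : Matrix (Fin n) (Fin n) ℝ) (hW : W.PosDef) (hB : B.PosDef)
    (lam : ℝ)
    (hlam : IsGreatest
      {μ : ℝ | ∃ v : Fin n → ℝ, v ≠ 0 ∧ (W⁻¹ * B).mulVec v = μ • v} lam)
    (Vhat : Matrix (Fin n) (Fin n) ℝ)
    (hVhat : Vhat = (((l : ℝ) - 1) / l) • W + ((1 + 1 / (k : ℝ)) * (l : ℝ)⁻¹) • B) :
    ∀ i, Vhat i i / W i i ≤
      ((l : ℝ) - 1) / l + (((k : ℝ) + 1) / k) * lam / l := by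
  classical
  intro i
  open scoped MatrixOrder in set S : Matrix (Fin n) (Fin n) ℝ := CFC.sqrt W with hSdef
  open scoped MatrixOrder in have hSS : S * S = W := CFC.sqrt_mul_sqrt_self W hW.posSemidef.nonneg
  open scoped MatrixOrder in have hSh : S.IsHermitian := (CFC.sqrt_nonneg W).posSemidef.1
  have hSdet : IsUnit S.det := by
    refine isUnit_iff_ne_zero.mpr fun h0 => ?_
    have hdet : S.det * S.det = W.det := by rw [← det_mul, hSS]
    rw [h0, mul_zero] at hdet
    exact absurd hdet.symm (ne_of_gt hW.det_pos)
  have hS1 : S * S⁻¹ = 1 := mul_nonsing_inv S hSdet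
  have hS1' : S⁻¹ * S = 1 := nonsing_inv_mul S hSdet
  have hSih : (S⁻¹).IsHermitian := hSh.inv
  set M : Matrix (Fin n) (Fin n) ℝ := S⁻¹ * B * S⁻¹ with hMdef
  have hMh : M.IsHermitian := by
    show Mᴴ = M
    rw [hMdef, conjTranspose_mul, conjTranspose_mul, hSih.eq, hB.1.eq, Matrix.mul_assoc]
  have hWinv : W⁻¹ = S⁻¹ * S⁻¹ := by rw [← hSS, Matrix.mul_inv_rev]
  -- every eigenvalue of M is at most lam
  have heig : ∀ μ : ℝ, ∀ v : Fin n → ℝ, v ≠ 0 → M.mulVec v = μ • v → μ ≤ lam := by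
    intro μ v hv hMv
    apply hlam.2
    refine ⟨S⁻¹.mulVec v, ?_, ?_⟩
    · intro h0
      apply hv
      have := congrArg (S.mulVec) h0
      rwa [mulVec_mulVec, hS1, one_mulVec, mulVec_zero] at this
    · have hm : W⁻¹ * B * S⁻¹ = S⁻¹ * M := by
        rw [hWinv, hMdef]; simp only [Matrix.mul_assoc]
      calc (W⁻¹ * B).mulVec (S⁻¹.mulVec v)
          = (W⁻¹ * B * S⁻¹).mulVec v := by rw [mulVec_mulVec]
        _ = (S⁻¹ * M).mulVec v := by rw [hm]
        _ = S⁻¹.mulVec (M.mulVec v) := by rw [mulVec_mulVec]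
        _ = μ • S⁻¹.mulVec v := by rw [hMv, mulVec_smul]
  have hSt : Sᵀ = S := by
    rw [← conjTranspose_eq_transpose_of_trivial]; exact hSh.eq
  have hSMS : S * (M * S) = B := by
    rw [hMdef]
    calc S * (S⁻¹ * B * S⁻¹ * S) = S * S⁻¹ * (B * (S⁻¹ * S)) := by
          simp only [Matrix.mul_assoc]
      _ = B := by rw [hS1, hS1', Matrix.mul_one, Matrix.one_mul]
  -- quadratic form bound
  have hquad : ∀ x : Fin n → ℝ, x ⬝ᵥ B.mulVec x ≤ lam * (x ⬝ᵥ W.mulVec x) := by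
    intro x
    have hz := rayleigh_bound M hMh lam heig (S.mulVec x)
    have h1 : S.mulVec x ⬝ᵥ M.mulVec (S.mulVec x) = x ⬝ᵥ B.mulVec x := by
      rw [mulVec_mulVec, ← dot_helper, hSt, mulVec_mulVec, hSMS]
    have h2 : S.mulVec x ⬝ᵥ S.mulVec x = x ⬝ᵥ W.mulVec x := by
      rw [← dot_helper, hSt, mulVec_mulVec, hSS]
    rw [h1, h2] at hz
    exact hz
  have hBW : B i i ≤ lam * W i i := by
    have := hquad (Pi.single i 1)
    simpa [single_dotProduct, mulVec_single] using this
  have hsne : (Pi.single i 1 : Fin n → ℝ) ≠ 0 := by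
    intro h0
    have := congrFun h0 i
    simp at this
  have hWii : 0 < W i i := by
    have := hW.dotProduct_mulVec_pos hsne
    simpa [single_dotProduct, mulVec_single] using this
  have hk0 : (0:ℝ) < k := by positivity
  have hl0 : (0:ℝ) < l := by positivity
  rw [hVhat]
  simp only [Matrix.add_apply, Matrix.smul_apply, smul_eq_mul]
  rw [div_le_iff₀ hWii]
  have hcoef : (0:ℝ) ≤ (1 + 1/(k:ℝ)) * (l:ℝ)⁻¹ := by positivity
  have key : (1 + 1/(k:ℝ)) * (l:ℝ)⁻¹ * B i i ≤ ((k:ℝ)+1)/k * lam / l * W i i := by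
    have h1 : (1 + 1/(k:ℝ)) * (l:ℝ)⁻¹ * B i i ≤ (1 + 1/(k:ℝ)) * (l:ℝ)⁻¹ * (lam * W i i) :=
      mul_le_mul_of_nonneg_left hBW hcoef
    have h2 : (1 + 1/(k:ℝ)) * (l:ℝ)⁻¹ * (lam * W i i) = ((k:ℝ)+1)/k * lam / l * W i i := by
      field_simp
    linarith [h1, h2.le]
  have expand : (((l:ℝ)-1)/l + ((k:ℝ)+1)/k*lam/l) * W i i
      = ((l:ℝ)-1)/l * W i i + ((k:ℝ)+1)/k*lam/l * W i i := by ring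
  rw [expand]
  linarith [key]
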